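/- Suppose H ∈ π₀ is a density of a Toda integral, i.e. for every j ∈ {0, …, l} there exists S_j ∈ π₀ with Q_j(H) = ∂(S_j) − u_j^{(0)} S_j. Then for every j ∈ {0, …, l} the commutator of Q_j with the hamiltonian vector field ξ_H is proportional to Q_j: Q_j ∘ ξ_H − ξ_H ∘ Q_j = −(δ_j H) · Q_j, i.e. Q_j(ξ_H(P)) − ξ_H(Q_j(P)) = −(δ_j H)·Q_j(P) for all P ∈ π₀. -/

import Mathlib

open MvPolynomial

noncomputable section

/-- The algebra of differential polynomials in the variables `u_i^{(n)}`, `1 ≤ i ≤ l`, `n ≥ 0`. -/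
abbrev Pi0 (l : ℕ) : Type := MvPolynomial (Fin l × ℕ) ℂ

/-- The variable `u_i^{(n)}`. -/
def u {l : ℕ} (i : Fin l) (n : ℕ) : Pi0 l := X (i, n)

/-- The derivation `∂` with `∂ u_i^{(n)} = u_i^{(n+1)}`. -/
def pa (l : ℕ) : Derivation ℂ (Pi0 l) (Pi0 l) :=
  mkDerivation ℂ (fun p => X (p.1, p.2 + 1))

/-- An affine generalized Cartan matrix of size `(l+1) × (l+1)`: an indecomposable integer
matrix with `a_{ii} = 2`, `a_{ij} ≤ 0` for `i ≠ j`, `a_{ij} = 0 ↔ a_{ji} = 0`, symmetrizable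
by positive rationals `d_i`, and admitting a vector of positive integer labels `(a_0,…,a_l)`
with `∑_j a_j a_{ij} = 0` for all `i`. -/
structure AffineGCM (l : ℕ) where
  A : Matrix (Fin (l+1)) (Fin (l+1)) ℤ
  diag : ∀ i, A i i = 2
  offdiag : ∀ i j, i ≠ j → A i j ≤ 0
  zeroIff : ∀ i j, A i j = 0 ↔ A j i = 0
  d : Fin (l+1) → ℚ
  d_pos : ∀ i, 0 < d i
  dsymm : ∀ i j, d i * A i j = d j * A j i
  label : Fin (l+1) → ℕ
  label_pos : ∀ i, 0 < label i
  null : ∀ i, ∑ j, (label j : ℤ) * A i j = 0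
  indec : ∀ S : Set (Fin (l+1)), (∀ i ∈ S, ∀ j ∉ S, A i j = 0) → S = ∅ ∨ S = Set.univ

namespace AffineGCM

variable {l : ℕ} (K : AffineGCM l)

/-- The symmetrized bilinear form `(α_i, α_j) := d_i a_{ij}`. -/
def B (i j : Fin (l+1)) : ℂ := (K.d i : ℂ) * (K.A i j : ℂ)

/-- `u_j^{(n)}` for `j = 0,…,l`, where `u_0^{(n)} := -(1/a_0) ∑_{i=1}^l a_i u_i^{(n)}`.
Here `j = 0` is `Fin.cases`' zero case and `j = i.succ` corresponds to `u_i^{(n)}`. -/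
def Uv (j : Fin (l+1)) (n : ℕ) : Pi0 l :=
  Fin.cases (-(1 / (K.label 0 : ℂ)) • ∑ i : Fin l, (K.label i.succ : ℂ) • u i n)
    (fun i => u i n) j

/-- The Faà di Bruno polynomials: `B_i^{(0)} = 1`,
`B_i^{(n+1)} = -u_i^{(0)} B_i^{(n)} + ∂ B_i^{(n)}`. -/
def FdB (i : Fin (l+1)) : ℕ → Pi0 l
  | 0 => 1
  | n+1 => -(K.Uv i 0) * FdB i n + pa l (FdB i n)

/-- The unique `ℂ`-derivation `Q_i` of `π₀` with `Q_i u_j^{(n)} = -(α_i,α_j) B_i^{(n)}`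
for `1 ≤ j ≤ l`, `n ≥ 0`. -/
def Q (i : Fin (l+1)) : Derivation ℂ (Pi0 l) (Pi0 l) :=
  mkDerivation ℂ (fun p => -(K.B i p.1.succ) • K.FdB i p.2)

/-- The variational derivative `δ_i P := ∑_{j=1}^l (α_i,α_j) ∑_{n ≥ 0} (-∂)^n (∂P/∂u_j^{(n)})`. -/
def varder (i : Fin (l+1)) (P : Pi0 l) : Pi0 l :=
  ∑ j : Fin l, K.B i j.succ •
    ∑ᶠ n : ℕ, ((-(pa l).toLinearMap) ^ n) (pderiv (j, n) P)

/-- The hamiltonian vector field `ξ_P`: the unique `ℂ`-derivation of `π₀` with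
`ξ_P u_i^{(n)} = ∂^{n+1}(δ_i P)`. -/
def xi (P : Pi0 l) : Derivation ℂ (Pi0 l) (Pi0 l) :=
  mkDerivation ℂ (fun p => ((pa l).toLinearMap ^ (p.2 + 1)) (K.varder p.1.succ P))

end AffineGCM

/-!
Both sides are derivations of `π₀` in `P` (the left one is the commutator `⁅Q_j, ξ_H⁆`), so it
suffices to compare them on the generators `u_k^{(n)}`. Put `T = ∂ - u_j^{(0)}`, so that
`B_j^{(n+1)} = T B_j^{(n)}`, `Q_j ∂ = T Q_j` and `ξ_H ∂ = ∂ ξ_H`.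

The heart of the matter is a twisted form of "the Euler operator kills total derivatives": the
operator `∑_n (-T)^n ∂/∂u_m^{(n)}` sends `T S` to `-c_m S`, where `u_j^{(0)} = ∑_m c_m u_m^{(0)}`.
Applied to `Q_j H = T S_j`, and corrected for the dependence of `B_j^{(p)}` on `u_j^{(0)}`, it gives
`Q_j (δ_k H) = (α_j, α_k) R` for one element `R` with `T R = δ_j H`. On `u_k^{(n)}` the claim then
reads `T^{n+1} R = δ_j H · B_j^{(n)} - ξ_H (B_j^{(n)})`, which follows by induction on `n`.
-/

theorem Module.End.neg_pow_succ_apply {R M : Type*} [Ring R] [AddCommGroup M] [Module R M]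
    (f : Module.End R M) (n : ℕ) (x : M) : ((-f) ^ (n + 1)) x = -((-f) ^ n) (f x) := by
  rw [pow_succ, Module.End.mul_apply, LinearMap.neg_apply, map_neg]

namespace MvPolynomial

variable {σ R : Type*} [CommSemiring R]

theorem derivation_pderiv_X {A : Type*} [AddCommMonoid A] [Module R A]
    [Module (MvPolynomial σ R) A] (D : Derivation R (MvPolynomial σ R) A) (i k : σ) :
    D (pderiv i (X k)) = 0 := by
  classical
  rw [pderiv_X, Pi.single_apply]
  split_ifs <;> simp

theorem derivation_eq_sum_pderiv (D : Derivation R (MvPolynomial σ R) (MvPolynomial σ R))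
    {P : MvPolynomial σ R} {s : Finset σ} (hs : (P.vars : Set σ) ⊆ s) :
    D P = ∑ i ∈ s, D (X i) * pderiv i P := by
  classical
  let E : Derivation R (MvPolynomial σ R) (MvPolynomial σ R) := ∑ i ∈ s, D (X i) • pderiv i
  have hE : ∀ Q, E Q = ∑ i ∈ s, D (X i) * pderiv i Q := fun Q => by
    change Derivation.coeFnAddMonoidHom (∑ i ∈ s, D (X i) • pderiv i) Q = _
    simp [map_sum, Finset.sum_apply]
  have hX : Set.EqOn (D ∘ X) (E ∘ X) s := fun q hq => by
    simp [hE, pderiv_X, Pi.single_apply, Finset.mem_coe.1 hq]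
  rw [derivation_eqOn_supported hX (mem_supported.2 hs), hE]

end MvPolynomial

open MvPolynomial

section DifferentialPolynomials

variable {l : ℕ}

lemma pa_X (p : Fin l × ℕ) : pa l (X p) = X (p.1, p.2 + 1) :=
  mkDerivation_X _ _ _

lemma commutator_pderiv_succ_pa (m : Fin l) (n : ℕ) :
    ⁅(pderiv (m, n + 1) : Derivation ℂ (Pi0 l) (Pi0 l)), pa l⁆ = pderiv (m, n) := by
  classical
  refine derivation_ext fun p => ?_
  rw [Derivation.commutator_apply, pa_X, derivation_pderiv_X, sub_zero, pderiv_X, pderiv_X]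
  simp only [Pi.single_apply, Prod.ext_iff, Nat.succ_inj]

lemma commutator_pderiv_zero_pa (m : Fin l) :
    ⁅(pderiv (m, 0) : Derivation ℂ (Pi0 l) (Pi0 l)), pa l⁆ = 0 := by
  refine derivation_ext fun p => ?_
  rw [Derivation.commutator_apply, pa_X, derivation_pderiv_X, sub_zero, Derivation.zero_apply,
    pderiv_X_of_ne (by simp [Prod.ext_iff])]

lemma pderiv_succ_pa (m : Fin l) (n : ℕ) (P : Pi0 l) :
    pderiv (m, n + 1) (pa l P) = pa l (pderiv (m, n + 1) P) + pderiv (m, n) P := by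
  have h := DFunLike.congr_fun (commutator_pderiv_succ_pa m n) P
  rw [Derivation.commutator_apply] at h
  linear_combination h

lemma pderiv_zero_pa (m : Fin l) (P : Pi0 l) :
    pderiv (m, 0) (pa l P) = pa l (pderiv (m, 0) P) := by
  have h := DFunLike.congr_fun (commutator_pderiv_zero_pa m) P
  rw [Derivation.commutator_apply, Derivation.zero_apply] at h
  linear_combination h

def twistedPa (v : Pi0 l) : Module.End ℂ (Pi0 l) :=
  (pa l).toLinearMap - LinearMap.mulLeft ℂ v

lemma twistedPa_apply (v x : Pi0 l) : twistedPa v x = pa l x - v * x := rfl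

lemma twistedPa_mul (v a b : Pi0 l) :
    twistedPa v (a * b) = twistedPa v a * b + a * pa l b := by
  simp only [twistedPa_apply, Derivation.leibniz, smul_eq_mul]
  ring

def orderBound (P : Pi0 l) : ℕ := P.vars.sup Prod.snd + 1

lemma lt_orderBound {P : Pi0 l} {p : Fin l × ℕ} (hp : p ∈ P.vars) : p.2 < orderBound P :=
  Nat.lt_succ_of_le (Finset.le_sup (f := Prod.snd) hp)

lemma pderiv_eq_zero_of_orderBound_le {P : Pi0 l} {n : ℕ} (h : orderBound P ≤ n) (m : Fin l) :
    pderiv (m, n) P = 0 :=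
  pderiv_eq_zero_of_notMem_vars fun hmem => (lt_orderBound hmem).not_ge h

lemma vars_subset_of_orderBound_le {P : Pi0 l} {N : ℕ} (h : orderBound P ≤ N) :
    (P.vars : Set (Fin l × ℕ)) ⊆ (Finset.univ ×ˢ Finset.range N : Finset (Fin l × ℕ)) :=
  fun p hp => by simpa using (lt_orderBound (Finset.mem_coe.1 hp)).trans_le h

def eulerOp (m : Fin l) (P : Pi0 l) : Pi0 l :=
  ∑ᶠ n : ℕ, ((-(pa l).toLinearMap) ^ n) (pderiv (m, n) P)

lemma eulerOp_eq_sum {P : Pi0 l} {M : ℕ} (h : orderBound P ≤ M) (m : Fin l) :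
    eulerOp m P = ∑ n ∈ Finset.range M, ((-(pa l).toLinearMap) ^ n) (pderiv (m, n) P) := by
  refine finsum_eq_sum_of_support_subset _ fun n hn => ?_
  by_contra hnM
  have hPn : orderBound P ≤ n := h.trans (by simpa using hnM)
  exact hn (by simp only [pderiv_eq_zero_of_orderBound_le hPn, map_zero])

end DifferentialPolynomials

namespace AffineGCM

variable {l : ℕ} (K : AffineGCM l)

lemma B_comm (a b : Fin (l+1)) : K.B a b = K.B b a := by
  simp only [B]
  exact_mod_cast K.dsymm a b

lemma sum_label_mul_B (p : Fin (l+1)) : ∑ i, (K.label i : ℂ) * K.B i p = 0 := by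
  have hnull : (∑ i, (K.label i : ℂ) * K.A p i) = 0 := by exact_mod_cast K.null p
  simp_rw [K.B_comm _ p]
  simp only [B, mul_left_comm _ (K.d p : ℂ), ← Finset.mul_sum, hnull, mul_zero]

def uCoeff (j : Fin (l+1)) (m : Fin l) : ℂ :=
  Fin.cases (-(1 / (K.label 0 : ℂ)) * K.label m.succ) (fun i => if i = m then 1 else 0) j

lemma Uv_eq_sum (j : Fin (l+1)) (n : ℕ) : K.Uv j n = ∑ m, K.uCoeff j m • X (m, n) := by
  cases j using Fin.cases with
  | zero => simp only [Uv, uCoeff, Fin.cases_zero, u, Finset.smul_sum, smul_smul]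
  | succ i => simp [Uv, uCoeff, u]

lemma sum_uCoeff_mul_B (j p : Fin (l+1)) : ∑ m, K.uCoeff j m * K.B m.succ p = K.B j p := by
  cases j using Fin.cases with
  | zero =>
    have h0 : (K.label 0 : ℂ) ≠ 0 := Nat.cast_ne_zero.mpr (K.label_pos 0).ne'
    have hnull := K.sum_label_mul_B p
    rw [Fin.sum_univ_succ] at hnull
    simp only [uCoeff, Fin.cases_zero, mul_assoc, ← Finset.mul_sum]
    rw [show ∑ m : Fin l, (K.label m.succ : ℂ) * K.B m.succ p = -(K.label 0 * K.B 0 p) by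
      linear_combination hnull]
    field_simp
  | succ i => simp [uCoeff]

lemma pderiv_Uv (j : Fin (l+1)) (m : Fin l) (n : ℕ) :
    pderiv (m, n) (K.Uv j 0) = if n = 0 then C (K.uCoeff j m) else 0 := by
  classical
  simp only [Uv_eq_sum, map_sum, Derivation.map_smul, pderiv_X, Pi.single_apply, Prod.ext_iff]
  split_ifs with hn <;> simp [hn, Ne.symm, smul_eq_C_mul]

lemma sum_uCoeff_smul_varder (j : Fin (l+1)) (H : Pi0 l) :
    ∑ m, K.uCoeff j m • K.varder m.succ H = K.varder j H := by
  simp only [varder, Finset.smul_sum, smul_smul]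
  rw [Finset.sum_comm]
  simp only [← Finset.sum_smul, K.sum_uCoeff_mul_B]

section Toda

variable (j : Fin (l+1))

local notation "𝒯" => twistedPa (Uv K j 0)

lemma FdB_succ (n : ℕ) : K.FdB j (n + 1) = 𝒯 (K.FdB j n) := by
  simp only [FdB, twistedPa_apply]
  ring

lemma Q_X (p : Fin l × ℕ) : K.Q j (X p) = -K.B j p.1.succ • K.FdB j p.2 :=
  mkDerivation_X _ _ _

lemma xi_X (H : Pi0 l) (p : Fin l × ℕ) :
    K.xi H (X p) = ((pa l).toLinearMap ^ (p.2 + 1)) (K.varder p.1.succ H) :=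
  mkDerivation_X _ _ _

lemma commutator_Q_pa : ⁅K.Q j, pa l⁆ = -K.Uv j 0 • K.Q j := by
  refine derivation_ext fun p => ?_
  rw [Derivation.commutator_apply, Derivation.smul_apply, pa_X, Q_X, Q_X, Derivation.map_smul,
    FdB_succ, twistedPa_apply]
  simp only [smul_eq_C_mul]
  ring

lemma semiconjBy_Q_pa :
    SemiconjBy (K.Q j : Module.End ℂ (Pi0 l)) (pa l : Module.End ℂ (Pi0 l)) 𝒯 := by
  refine LinearMap.ext fun P => ?_
  have h := DFunLike.congr_fun (K.commutator_Q_pa j) P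
  rw [Derivation.commutator_apply, Derivation.smul_apply, smul_eq_mul] at h
  change K.Q j (pa l P) = twistedPa (K.Uv j 0) (K.Q j P)
  rw [twistedPa_apply]
  linear_combination h

lemma Q_pa_pow (n : ℕ) (P : Pi0 l) :
    K.Q j (((pa l).toLinearMap ^ n) P) = (𝒯 ^ n) (K.Q j P) :=
  LinearMap.congr_fun ((K.semiconjBy_Q_pa j).pow_right n) P

lemma Q_neg_pa_pow (n : ℕ) (P : Pi0 l) :
    K.Q j (((-(pa l).toLinearMap) ^ n) P) = ((-𝒯) ^ n) (K.Q j P) :=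
  LinearMap.congr_fun ((K.semiconjBy_Q_pa j).neg_right.pow_right n) P

def QOf (W : ℕ → Pi0 l) : Derivation ℂ (Pi0 l) (Pi0 l) :=
  mkDerivation ℂ (fun p => -K.B j p.1.succ • W p.2)

lemma QOf_X (W : ℕ → Pi0 l) (p : Fin l × ℕ) : K.QOf j W (X p) = -K.B j p.1.succ • W p.2 :=
  mkDerivation_X _ _ _

lemma Q_eq_QOf : K.Q j = K.QOf j (K.FdB j) := rfl

def grad (H : Pi0 l) (n : ℕ) : Pi0 l := ∑ m, K.B j m.succ • pderiv (m, n) H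

lemma QOf_eq_neg_sum_grad (W : ℕ → Pi0 l) {H : Pi0 l} {N : ℕ} (hN : orderBound H ≤ N) :
    K.QOf j W H = -∑ n ∈ Finset.range N, W n * K.grad j H n := by
  rw [derivation_eq_sum_pderiv _ (vars_subset_of_orderBound_le hN), Finset.sum_product,
    Finset.sum_comm, ← Finset.sum_neg_distrib]
  refine Finset.sum_congr rfl fun n _ => ?_
  simp only [grad, QOf_X, Finset.mul_sum, ← Finset.sum_neg_distrib, smul_eq_C_mul, map_neg]
  exact Finset.sum_congr rfl fun m _ => by ring

lemma varder_eq_sum_grad {H : Pi0 l} {N : ℕ} (hN : orderBound H ≤ N) :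
    K.varder j H = ∑ n ∈ Finset.range N, ((-(pa l).toLinearMap) ^ n) (K.grad j H n) := by
  simp only [varder, ← eulerOp.eq_def, eulerOp_eq_sum hN, grad, map_sum, map_smul,
    Finset.smul_sum]
  exact Finset.sum_comm

/-- `dFdB n p` is `∂B_j^{(p)}/∂v^{(n)}`, where `B_j^{(p)}` is viewed as a differential
polynomial in `v = u_j^{(0)}` (see `pderiv_FdB`). -/
def dFdB : ℕ → ℕ → Pi0 l
  | _, 0 => 0
  | 0, p + 1 => 𝒯 (dFdB 0 p) - K.FdB j p
  | n + 1, p + 1 => 𝒯 (dFdB (n + 1) p) + dFdB n p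

lemma dFdB_eq_zero_of_le {n p : ℕ} (h : p ≤ n) : K.dFdB j n p = 0 := by
  induction p generalizing n with
  | zero => cases n <;> rfl
  | succ p ih =>
    obtain ⟨n, rfl⟩ : ∃ k, n = k + 1 := ⟨n - 1, by omega⟩
    simp only [dFdB, ih (by omega : p ≤ n + 1), ih (by omega : p ≤ n), map_zero, add_zero]

lemma pderiv_FdB (m : Fin l) (n p : ℕ) :
    pderiv (m, n) (K.FdB j p) = K.uCoeff j m • K.dFdB j n p := by
  induction p generalizing n with
  | zero => cases n <;> simp [FdB, dFdB]
  | succ p ih =>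
    cases n with
    | zero =>
      simp only [FdB, dFdB, map_add, pderiv_mul, map_neg, pderiv_Uv, if_pos, pderiv_zero_pa,
        ih, Derivation.map_smul]
      simp only [twistedPa_apply, smul_eq_C_mul]
      ring
    | succ n =>
      simp only [FdB, dFdB, map_add, pderiv_mul, map_neg, pderiv_Uv, if_neg n.succ_ne_zero,
        pderiv_succ_pa, ih, Derivation.map_smul]
      simp only [twistedPa_apply, smul_eq_C_mul]
      ring

lemma commutator_pderiv_Q (m : Fin l) (n : ℕ) :
    ⁅(pderiv (m, n) : Derivation ℂ (Pi0 l) (Pi0 l)), K.Q j⁆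
      = K.uCoeff j m • K.QOf j (K.dFdB j n) := by
  refine derivation_ext fun p => ?_
  rw [Derivation.commutator_apply, derivation_pderiv_X, sub_zero, Q_X, Derivation.map_smul,
    pderiv_FdB, Derivation.smul_apply, QOf_X, smul_comm]

lemma pderiv_Q (m : Fin l) (n : ℕ) (P : Pi0 l) :
    pderiv (m, n) (K.Q j P)
      = K.Q j (pderiv (m, n) P) + K.uCoeff j m • K.QOf j (K.dFdB j n) P := by
  have h := DFunLike.congr_fun (K.commutator_pderiv_Q j m n) P
  rw [Derivation.commutator_apply, Derivation.smul_apply] at h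
  linear_combination h

def phi (p : ℕ) (g : Pi0 l) : Pi0 l :=
  ∑ n ∈ Finset.range p, ((-𝒯) ^ n) (K.dFdB j n p * g)

lemma phi_eq_sum_range {p M : ℕ} (h : p ≤ M) (g : Pi0 l) :
    K.phi j p g = ∑ n ∈ Finset.range M, ((-𝒯) ^ n) (K.dFdB j n p * g) :=
  Finset.sum_subset (Finset.range_subset_range.2 h) fun n _ hn => by
    rw [K.dFdB_eq_zero_of_le j (by simpa using hn), zero_mul, map_zero]

lemma phi_succ (p : ℕ) (g : Pi0 l) :
    K.phi j (p + 1) g = -K.phi j p (pa l g) - K.FdB j p * g := by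
  set a : ℕ → Pi0 l := fun n => ((-𝒯) ^ (n + 1)) (K.dFdB j n p * g) with ha
  have hstep : ∀ k, ((-𝒯) ^ (k + 1)) (K.dFdB j (k + 1) (p + 1) * g)
      = (a k - a (k + 1)) - ((-𝒯) ^ (k + 1)) (K.dFdB j (k + 1) p * pa l g) := fun k => by
    have hmul : K.dFdB j (k + 1) (p + 1) * g
        = 𝒯 (K.dFdB j (k + 1) p * g) - K.dFdB j (k + 1) p * pa l g + K.dFdB j k p * g := by
      rw [dFdB, twistedPa_mul]; ring
    simp only [ha]
    rw [hmul, map_add, map_sub, Module.End.neg_pow_succ_apply (n := k + 1)]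
    abel
  have hzero : K.dFdB j 0 (p + 1) * g = -a 0 - K.dFdB j 0 p * pa l g - K.FdB j p * g := by
    simp only [ha, dFdB, zero_add, pow_one, LinearMap.neg_apply, neg_neg, twistedPa_mul]
    ring
  have haP : a p = 0 := by
    simp only [ha, K.dFdB_eq_zero_of_le j le_rfl, zero_mul, map_zero]
  rw [phi, Finset.sum_range_succ', Finset.sum_congr rfl fun k _ => hstep k,
    Finset.sum_sub_distrib, Finset.sum_range_sub', haP, pow_zero, Module.End.one_apply, hzero,
    K.phi_eq_sum_range j p.le_succ, Finset.sum_range_succ', pow_zero, Module.End.one_apply]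
  abel

lemma twistedPa_phi (p : ℕ) (g : Pi0 l) :
    𝒯 (K.phi j p g) = -(K.FdB j p * g) + ((-(pa l).toLinearMap) ^ p) g := by
  induction p generalizing g with
  | zero => simp [phi, FdB]
  | succ p ih =>
    rw [phi_succ, map_sub, map_neg, ih, twistedPa_mul, ← FdB_succ,
      Module.End.neg_pow_succ_apply]
    simp only [Derivation.coeFn_coe]
    ring

lemma sum_neg_twistedPa_pow_pderiv_twistedPa (m : Fin l) {S : Pi0 l} {M : ℕ}
    (hM : orderBound S < M) :
    ∑ n ∈ Finset.range M, ((-𝒯) ^ n) (pderiv (m, n) (𝒯 S)) = -K.uCoeff j m • S := by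
  obtain ⟨N, rfl⟩ : ∃ N, M = N + 1 := ⟨M - 1, by omega⟩
  set f : ℕ → Pi0 l := fun n => ((-𝒯) ^ n) (𝒯 (pderiv (m, n) S)) with hf
  have hstep : ∀ n, ((-𝒯) ^ (n + 1)) (pderiv (m, n + 1) (𝒯 S)) = f (n + 1) - f n := fun n => by
    rw [twistedPa_apply, map_sub, pderiv_succ_pa, pderiv_mul, K.pderiv_Uv, if_neg n.succ_ne_zero,
      zero_mul, zero_add, add_sub_right_comm, ← twistedPa_apply, map_add,
      Module.End.neg_pow_succ_apply (n := n) (x := pderiv (m, n) S), hf, sub_eq_add_neg]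
  have hfN : f N = 0 := by
    simp only [hf, pderiv_eq_zero_of_orderBound_le (Nat.le_of_lt_succ hM), map_zero]
  rw [Finset.sum_range_succ', Finset.sum_congr rfl fun n _ => hstep n, Finset.sum_range_sub, hfN,
    pow_zero, Module.End.one_apply, twistedPa_apply, map_sub, pderiv_zero_pa, pderiv_mul,
    K.pderiv_Uv, if_pos rfl]
  simp only [hf, pow_zero, Module.End.one_apply, twistedPa_apply, smul_eq_C_mul, map_neg]
  ring

def varderPrimitive (H S : Pi0 l) : Pi0 l :=
  -S + ∑ p ∈ Finset.range (orderBound H), K.phi j p (K.grad j H p)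

variable {K j} {H S : Pi0 l}

lemma Q_eulerOp (hS : K.Q j H = 𝒯 S) (m : Fin l) :
    K.Q j (eulerOp m H) = K.uCoeff j m • K.varderPrimitive j H S := by
  obtain ⟨M, hHM, hSM⟩ : ∃ M, orderBound H ≤ M ∧ orderBound S < M :=
    ⟨orderBound H + orderBound S + 1, by omega, by omega⟩
  have hQpderiv : ∀ n, K.Q j (pderiv (m, n) H)
      = pderiv (m, n) (𝒯 S) + K.uCoeff j m • ∑ p ∈ Finset.range (orderBound H),
          K.dFdB j n p * K.grad j H p := fun n => by
    rw [← hS, pderiv_Q, QOf_eq_neg_sum_grad _ _ _ le_rfl, smul_neg, neg_add_cancel_right]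
  calc K.Q j (eulerOp m H)
      = ∑ n ∈ Finset.range M, ((-𝒯) ^ n) (K.Q j (pderiv (m, n) H)) := by
        rw [eulerOp_eq_sum hHM, map_sum]
        simp only [Q_neg_pa_pow]
    _ = -K.uCoeff j m • S + K.uCoeff j m • ∑ p ∈ Finset.range (orderBound H),
          ∑ n ∈ Finset.range M, ((-𝒯) ^ n) (K.dFdB j n p * K.grad j H p) := by
        simp only [hQpderiv, map_add, map_smul, map_sum, Finset.sum_add_distrib,
          K.sum_neg_twistedPa_pow_pderiv_twistedPa j m hSM]
        rw [Finset.sum_comm, Finset.smul_sum]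
    _ = K.uCoeff j m • K.varderPrimitive j H S := by
        rw [varderPrimitive, smul_add, smul_neg, neg_smul]
        congr 2
        exact Finset.sum_congr rfl fun p hp =>
          (K.phi_eq_sum_range j (by simp at hp; omega) _).symm

lemma Q_varder (hS : K.Q j H = 𝒯 S) (k : Fin (l+1)) :
    K.Q j (K.varder k H) = K.B j k • K.varderPrimitive j H S := by
  simp only [varder, ← eulerOp.eq_def, map_sum, Derivation.map_smul, Q_eulerOp hS, smul_smul,
    ← Finset.sum_smul, K.B_comm k, mul_comm (K.B _ k), K.sum_uCoeff_mul_B]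

lemma twistedPa_varderPrimitive (hS : K.Q j H = 𝒯 S) :
    𝒯 (K.varderPrimitive j H S) = K.varder j H := by
  have hTS : 𝒯 S = -∑ p ∈ Finset.range (orderBound H), K.FdB j p * K.grad j H p := by
    rw [← hS, Q_eq_QOf, QOf_eq_neg_sum_grad _ _ _ le_rfl]
  rw [varderPrimitive, map_add, map_neg, map_sum, hTS, K.varder_eq_sum_grad j le_rfl]
  simp only [twistedPa_phi, Finset.sum_add_distrib, Finset.sum_neg_distrib]
  ring

lemma commutator_xi_pa : ⁅K.xi H, pa l⁆ = 0 := by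
  refine derivation_ext fun p => ?_
  rw [Derivation.commutator_apply, pa_X, xi_X, xi_X, pow_succ' _ (p.2 + 1), Module.End.mul_apply,
    Derivation.coeFn_coe, sub_self, Derivation.zero_apply]

lemma xi_pa (P : Pi0 l) : K.xi H (pa l P) = pa l (K.xi H P) := by
  have h := DFunLike.congr_fun (commutator_xi_pa (K := K) (H := H)) P
  rw [Derivation.commutator_apply, Derivation.zero_apply] at h
  exact sub_eq_zero.1 h

lemma xi_Uv : K.xi H (K.Uv j 0) = pa l (K.varder j H) := by
  simp only [Uv_eq_sum, map_sum, Derivation.map_smul, xi_X, zero_add, pow_one,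
    Derivation.coeFn_coe, ← K.sum_uCoeff_smul_varder j H]

lemma xi_FdB_succ (n : ℕ) :
    K.xi H (K.FdB j (n + 1)) = 𝒯 (K.xi H (K.FdB j n)) - pa l (K.varder j H) * K.FdB j n := by
  rw [FdB, map_add, xi_pa, Derivation.leibniz, map_neg, xi_Uv, twistedPa_apply, smul_eq_mul,
    smul_eq_mul]
  ring

lemma twistedPa_pow_succ_varderPrimitive (hS : K.Q j H = 𝒯 S) (n : ℕ) :
    (𝒯 ^ (n + 1)) (K.varderPrimitive j H S) = K.varder j H * K.FdB j n - K.xi H (K.FdB j n) := by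
  induction n with
  | zero => simp [twistedPa_varderPrimitive hS, FdB]
  | succ n ih =>
    rw [pow_succ', Module.End.mul_apply, ih, map_sub, xi_FdB_succ, FdB_succ, twistedPa_mul,
      twistedPa_apply (K.Uv j 0) (K.varder j H), twistedPa_apply (K.Uv j 0) (K.FdB j n)]
    ring

theorem commutator_Q_xi (hS : K.Q j H = 𝒯 S) : ⁅K.Q j, K.xi H⁆ = -K.varder j H • K.Q j := by
  refine derivation_ext fun p => ?_
  rw [Derivation.commutator_apply, Derivation.smul_apply, xi_X, Q_pa_pow, Q_varder hS, map_smul,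
    twistedPa_pow_succ_varderPrimitive hS, Q_X, Derivation.map_smul]
  simp only [smul_eq_C_mul, map_neg]
  ring

end Toda

end AffineGCM

theorem commutator_with_hamiltonian_vf_general (l : ℕ) (K : AffineGCM l)
    (H : Pi0 l)
    (hH : ∀ j : Fin (l+1), ∃ S : Pi0 l, K.Q j H = pa l S - K.Uv j 0 * S) :
    ∀ (j : Fin (l+1)) (P : Pi0 l),
      K.Q j (K.xi H P) - K.xi H (K.Q j P) = -(K.varder j H) * K.Q j P := by
  intro j P
  obtain ⟨S, hS⟩ := hH j
  have h := DFunLike.congr_fun (AffineGCM.commutator_Q_xi hS) P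
  rwa [Derivation.commutator_apply, Derivation.smul_apply, smul_eq_mul] at h

/-- if `H ∈ π₀` is a density of a Toda integral, i.e. for every `j` there is
`S_j ∈ π₀` with `Q_j(H) = ∂ S_j − u_j^{(0)} S_j`, then
`Q_j ∘ ξ_H − ξ_H ∘ Q_j = −(δ_j H) · Q_j` for every `j`. -/
theorem commutator_with_hamiltonian_vf (l : ℕ) (hl : 1 ≤ l) (K : AffineGCM l)
    (H : Pi0 l)
    (hH : ∀ j : Fin (l+1), ∃ S : Pi0 l, K.Q j H = pa l S - K.Uv j 0 * S) :
    ∀ (j : Fin (l+1)) (P : Pi0 l),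
      K.Q j (K.xi H P) - K.xi H (K.Q j P) = -(K.varder j H) * K.Q j P :=
  commutator_with_hamiltonian_vf_general l K H hH
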